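/- Let 𝕋 = ℝ/ℤ, let C₃ ≠ 0 and C₅ be real numbers, let A₁, A₂, A₃, A₄ ∈ ℝ, and let U : 𝕋 → ℝ be smooth. Set a₁ := (A₃ − A₁ − 10)/12, a₂ := (A₃ − A₂ − 20)/6, a₃ := (A₂ − 10)/3, a₄ := (2/3)(10 − A₂), and define G₂(U) := (C₅/C₃)( a₁ U_{2x} + a₂ (U² − ⟨U²⟩) + a₃ ( U_x (U − ⟨U⟩)_{−x} + ⟨U²⟩ − ⟨U⟩² ) + a₄ ⟨U⟩ (U − ⟨U⟩) ), F₃(U) := C₃ (U_{3x} + 6 U U_x), and F₅(U) := C₅ ( U_{5x} + A₁ U_x U_{2x} + A₂ U U_{3x} + A₃ U² U_x + A₄ ⟨U²⟩ U_x ). Then F₅(U) + [G₂, F₃](U) = C₅ ( U_{5x} + 20 U_x U_{2x} + 10 U U_{3x} + 30 U² U_x + (A₃ + A₄ − 4A₂ + 10) ⟨U²⟩ U_x + (20 − 2A₂) ⟨U⟩² U_x + (A₂ − 10) ⟨U⟩ (U_{3x} + 6 U U_x) ). In particular, up to terms proportional to constants of motion, the h⁴ normal form is the fifth-order KdV vector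 field K₅(U) = U_{5x} + 20 U_x U_{2x} + 10 U U_{3x} + 30 U² U_x. -/

import Mathlib

/-- The average `⟨F⟩ = ∫_𝕋 F(x) dx` of a (1-periodic) function on the circle. -/
noncomputable def avg (F : ℝ → ℝ) : ℝ := ∫ x in (0:ℝ)..1, F x

/-- The zero-average primitive `F_{−x}` of a zero-average function `F` on the circle. -/
noncomputable def prim (F : ℝ → ℝ) : ℝ → ℝ := fun x =>
  (∫ t in (0:ℝ)..x, F t) - ∫ s in (0:ℝ)..1, ∫ t in (0:ℝ)..s, F t

/-- The first normal form generator `G₂`. -/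
noncomputable def G2op (C₃ C₅ a₁ a₂ a₃ a₄ : ℝ) (F : ℝ → ℝ) : ℝ → ℝ := fun x =>
  (C₅ / C₃) * (a₁ * iteratedDeriv 2 F x
    + a₂ * (F x ^ 2 - avg (fun y => F y ^ 2))
    + a₃ * (deriv F x * prim (fun y => F y - avg F) x
        + avg (fun y => F y ^ 2) - (avg F) ^ 2)
    + a₄ * avg F * (F x - avg F))

/-- The KdV map `F₃(U) = C₃(U_{3x} + 6 U U_x)`. -/
noncomputable def F3op (C₃ : ℝ) (F : ℝ → ℝ) : ℝ → ℝ := fun x =>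
  C₃ * (iteratedDeriv 3 F x + 6 * F x * deriv F x)

/-- The fifth order map
`F₅(U) = C₅(U_{5x} + A₁U_xU_{2x} + A₂UU_{3x} + A₃U²U_x + A₄⟨U²⟩U_x)`. -/
noncomputable def F5op (C₅ A₁ A₂ A₃ A₄ : ℝ) (F : ℝ → ℝ) : ℝ → ℝ := fun x =>
  C₅ * (iteratedDeriv 5 F x + A₁ * deriv F x * iteratedDeriv 2 F x
    + A₂ * F x * iteratedDeriv 3 F x + A₃ * F x ^ 2 * deriv F x
    + A₄ * avg (fun y => F y ^ 2) * deriv F x)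

lemma my_periodic_deriv {f : ℝ → ℝ} (hf : Function.Periodic f 1) :
    Function.Periodic (deriv f) 1 := by
  intro x
  have h : (fun y => f (y + 1)) = f := funext fun y => hf y
  calc deriv f (x + 1) = deriv (fun y => f (y + 1)) x := (deriv_comp_add_const f 1 x).symm
    _ = deriv f x := by rw [h]

lemma my_periodic_iter {f : ℝ → ℝ} (hf : Function.Periodic f 1) (k : ℕ) :
    Function.Periodic (iteratedDeriv k f) 1 := by
  induction k with
  | zero => simpa [iteratedDeriv_zero] using hf
  | succ n ih => rw [iteratedDeriv_succ]; exact my_periodic_deriv ih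

lemma my_avg_deriv_zero {f g : ℝ → ℝ} (hd : ∀ y, HasDerivAt g (f y) y)
    (hc : Continuous f) (hp : Function.Periodic g 1) : avg f = 0 := by
  unfold avg
  rw [intervalIntegral.integral_eq_sub_of_hasDerivAt (fun y _ => hd y)
    (hc.intervalIntegrable _ _)]
  have := hp 0
  simp only [zero_add] at this
  rw [this, sub_self]

lemma my_prim_formula {f g : ℝ → ℝ} (hd : ∀ y, HasDerivAt g (f y) y)
    (hcf : Continuous f) (hcg : Continuous g) (x : ℝ) :
    prim f x = g x - avg g := by
  unfold prim avg
  have h1 : ∀ s : ℝ, (∫ t in (0:ℝ)..s, f t) = g s - g 0 := fun s =>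
    intervalIntegral.integral_eq_sub_of_hasDerivAt (fun y _ => hd y)
      (hcf.intervalIntegrable _ _)
  rw [h1 x]
  have h2 : (∫ s in (0:ℝ)..1, ∫ t in (0:ℝ)..s, f t)
      = ∫ s in (0:ℝ)..1, (g s - g 0) := by
    apply intervalIntegral.integral_congr
    intro s _
    exact h1 s
  rw [h2, intervalIntegral.integral_sub (hcg.intervalIntegrable _ _)
    intervalIntegrable_const]
  simp


lemma my_avg_lin (c d : ℝ) {f g : ℝ → ℝ} (hf : Continuous f) (hg : Continuous g) :
    avg (fun y => c * f y + d * g y) = c * avg f + d * avg g := by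
  unfold avg
  rw [intervalIntegral.integral_add (f := fun y => c * f y) (g := fun y => d * g y) ((continuous_const.mul hf).intervalIntegrable _ _)
    ((continuous_const.mul hg).intervalIntegrable _ _),
    intervalIntegral.integral_const_mul, intervalIntegral.integral_const_mul]

lemma my_avg_lin3 (c d e : ℝ) {f g h : ℝ → ℝ} (hf : Continuous f) (hg : Continuous g)
    (hh : Continuous h) :
    avg (fun y => c * f y + d * g y + e * h y) = c * avg f + d * avg g + e * avg h := by
  have : (fun y => c * f y + d * g y + e * h y)
      = fun y => 1 * (c * f y + d * g y) + e * h y := by funext y; ring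
  rw [this, my_avg_lin 1 e (f := fun y => c * f y + d * g y) ((continuous_const.mul hf).add (continuous_const.mul hg)) hh,
    my_avg_lin c d hf hg]
  show 1 * (c * avg f + d * avg g) + e * avg h = _
  ring

set_option maxHeartbeats 4000000 in
/-- With the choice `a₁ = (A₃−A₁−10)/12`, `a₂ = (A₃−A₂−20)/6`, `a₃ = (A₂−10)/3`,
`a₄ = (2/3)(10−A₂)`, one has `F₅(U) + [G₂, F₃](U) = C₅(K₅(U) + (A₃+A₄−4A₂+10)⟨U²⟩U_x
+ (20−2A₂)⟨U⟩²U_x + (A₂−10)⟨U⟩(U_{3x}+6UU_x))` where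
`K₅(U) = U_{5x} + 20U_xU_{2x} + 10UU_{3x} + 30U²U_x`. -/
theorem stmt_12 (C₃ C₅ : ℝ) (hC₃ : C₃ ≠ 0) (A₁ A₂ A₃ A₄ : ℝ) (a₁ a₂ a₃ a₄ : ℝ)
    (ha₁ : a₁ = (A₃ - A₁ - 10) / 12) (ha₂ : a₂ = (A₃ - A₂ - 20) / 6)
    (ha₃ : a₃ = (A₂ - 10) / 3) (ha₄ : a₄ = (2 / 3) * (10 - A₂))
    (U : ℝ → ℝ) (hU : ContDiff ℝ (⊤ : ℕ∞) U) (hper : Function.Periodic U 1) :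
    ∀ x : ℝ,
      HasDerivAt (fun ε : ℝ =>
          G2op C₃ C₅ a₁ a₂ a₃ a₄ (fun y => U y + ε * F3op C₃ U y) x
            - F3op C₃ (fun y => U y + ε * G2op C₃ C₅ a₁ a₂ a₃ a₄ U y) x)
        (C₅ * (iteratedDeriv 5 U x + 20 * deriv U x * iteratedDeriv 2 U x
            + 10 * U x * iteratedDeriv 3 U x + 30 * U x ^ 2 * deriv U x
            + (A₃ + A₄ - 4 * A₂ + 10) * avg (fun y => U y ^ 2) * deriv U x
            + (20 - 2 * A₂) * (avg U) ^ 2 * deriv U x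
            + (A₂ - 10) * avg U * (iteratedDeriv 3 U x + 6 * U x * deriv U x))
          - F5op C₅ A₁ A₂ A₃ A₄ U x) 0 := by
  intro x
  -- basic differentiability facts
  have hdk : ∀ k : ℕ, Differentiable ℝ (iteratedDeriv k U) := fun k =>
    hU.differentiable_iteratedDeriv k (by exact_mod_cast ENat.coe_lt_top k)
  have hck : ∀ k : ℕ, Continuous (iteratedDeriv k U) := fun k => (hdk k).continuous
  have hu : ∀ (k : ℕ) (y : ℝ), HasDerivAt (iteratedDeriv k U) (iteratedDeriv (k+1) U y) y := by
    intro k y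
    have h := (hdk k y).hasDerivAt
    rwa [← iteratedDeriv_succ] at h
  have hu0 : ∀ y, HasDerivAt U (deriv U y) y := by
    intro y
    have h := hu 0 y
    rwa [iteratedDeriv_zero, iteratedDeriv_one] at h
  have hu1 : ∀ y, HasDerivAt (deriv U) (iteratedDeriv 2 U y) y := by
    intro y
    have h := hu 1 y
    rwa [iteratedDeriv_one] at h
  have hcU : Continuous U := hU.continuous
  have hcd : Continuous (deriv U) := by
    have h := hck 1; rwa [iteratedDeriv_one] at h
  have hup : ∀ k : ℕ, Function.Periodic (iteratedDeriv k U) 1 := my_periodic_iter hper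
  have hperd : Function.Periodic (deriv U) 1 := by
    have h := hup 1; rwa [iteratedDeriv_one] at h
  have hsq : ∀ y, HasDerivAt (fun z => U z ^ 2) (2 * U y * deriv U y) y := by
    intro y; have h := (hu0 y).pow 2
    norm_num at h; exact h
  have hcb : ∀ y, HasDerivAt (fun z => U z ^ 3) (3 * U y ^ 2 * deriv U y) y := by
    intro y; have h := (hu0 y).pow 3
    norm_num at h; exact h
  have hdsq : ∀ y, HasDerivAt (fun z => deriv U z ^ 2) (2 * deriv U y * iteratedDeriv 2 U y) y := by
    intro y; have h := (hu1 y).pow 2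
    norm_num at h; exact h
  -- Q
  have hQd : ∀ y, HasDerivAt (prim (fun z => U z - avg U)) (U y - avg U) y := by
    intro y
    exact (((hcU.sub continuous_const).integral_hasStrictDerivAt 0 y).hasDerivAt).sub_const _
  -- derivatives of F₃
  have hFd : ∀ y, HasDerivAt (F3op C₃ U) ((C₃ * (iteratedDeriv 4 U y + 6 * deriv U y ^ 2 + 6 * U y * iteratedDeriv 2 U y))) y := by
    intro y
    have h := ((hu 3 y).add (((hu0 y).const_mul 6).mul (hu1 y))).const_mul C₃
    exact h.congr_deriv (by ring)
  have hF1d : ∀ y, HasDerivAt (fun z => C₃ * (iteratedDeriv 4 U z + 6 * deriv U z ^ 2 + 6 * U z * iteratedDeriv 2 U z)) ((C₃ * (iteratedDeriv 5 U y + 18 * deriv U y * iteratedDeriv 2 U y + 6 * U y * iteratedDeriv 3 U y))) y := by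
    intro y
    have h := (((hu 4 y).add ((hdsq y).const_mul 6)).add (((hu0 y).const_mul 6).mul (hu 2 y))).const_mul C₃
    exact h.congr_deriv (by ring)
  -- derivatives of G₂
  have hGd : ∀ y, HasDerivAt (G2op C₃ C₅ a₁ a₂ a₃ a₄ U) ((C₅ / C₃ * (a₁ * iteratedDeriv 3 U y + a₂ * (2 * U y * deriv U y) + a₃ * (iteratedDeriv 2 U y * prim (fun z => U z - avg U) y + deriv U y * (U y - avg U)) + a₄ * avg U * deriv U y))) y := by
    intro y
    have h := (((((hu 2 y).const_mul a₁).add ((((hsq y)).sub_const (avg (fun w => U w ^ 2))).const_mul a₂)).add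
        (((((hu1 y).mul (hQd y)).add_const (avg (fun w => U w ^ 2))).sub_const (avg U ^ 2)).const_mul a₃)).add
        (((hu0 y).sub_const (avg U)).const_mul (a₄ * avg U))).const_mul (C₅ / C₃)
    exact h.congr_deriv (by ring)
  have hG1d : ∀ y, HasDerivAt (fun z => C₅ / C₃ * (a₁ * iteratedDeriv 3 U z + a₂ * (2 * U z * deriv U z) + a₃ * (iteratedDeriv 2 U z * prim (fun z => U z - avg U) z + deriv U z * (U z - avg U)) + a₄ * avg U * deriv U z)) ((C₅ / C₃ * (a₁ * iteratedDeriv 4 U y + a₂ * (2 * deriv U y ^ 2 + 2 * U y * iteratedDeriv 2 U y) + a₃ * (iteratedDeriv 3 U y * prim (fun z => U z - avg U) y + 2 * iteratedDeriv 2 U y * (U y - avg U) + deriv U y ^ 2) + a₄ * avg U * iteratedDeriv 2 U y))) y := by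
    intro y
    have h := (((((hu 3 y).const_mul a₁).add ((((hu0 y).const_mul 2).mul (hu1 y)).const_mul a₂)).add
        ((((hu 2 y).mul (hQd y)).add ((hu1 y).mul ((hu0 y).sub_const (avg U)))).const_mul a₃)).add
        ((hu1 y).const_mul (a₄ * avg U))).const_mul (C₅ / C₃)
    exact h.congr_deriv (by ring)
  have hG2d : ∀ y, HasDerivAt (fun z => C₅ / C₃ * (a₁ * iteratedDeriv 4 U z + a₂ * (2 * deriv U z ^ 2 + 2 * U z * iteratedDeriv 2 U z) + a₃ * (iteratedDeriv 3 U z * prim (fun z => U z - avg U) z + 2 * iteratedDeriv 2 U z * (U z - avg U) + deriv U z ^ 2) + a₄ * avg U * iteratedDeriv 2 U z)) ((C₅ / C₃ * (a₁ * iteratedDeriv 5 U y + a₂ * (6 * deriv U y * iteratedDeriv 2 U y + 2 * U y * iteratedDeriv 3 U y) + a₃ * (iteratedDeriv 4 U y * prim (fun z => U z - avg U) y + 3 * iteratedDeriv 3 U y * (U y - avg U) + 4 * deriv U y * iteratedDeriv 2 U y) + a₄ * avg U * iteratedDeriv 3 U y))) y := by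
    intro y
    have h := (((((hu 4 y).const_mul a₁).add ((((hdsq y).const_mul 2).add (((hu0 y).const_mul 2).mul (hu 2 y))).const_mul a₂)).add
        (((((hu 3 y).mul (hQd y)).add (((hu 2 y).const_mul 2).mul ((hu0 y).sub_const (avg U)))).add (hdsq y)).const_mul a₃)).add
        ((hu 2 y).const_mul (a₄ * avg U))).const_mul (C₅ / C₃)
    exact h.congr_deriv (by ring)
  -- average identities
  have hcF : Continuous (F3op C₃ U) := by
    unfold F3op
    exact continuous_const.mul ((hck 3).add ((continuous_const.mul hcU).mul hcd))
  have havgu2 : avg (iteratedDeriv 2 U) = 0 := my_avg_deriv_zero (hu 1) (hck 2) (hup 1)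
  have hFP : ∀ y, HasDerivAt (fun z => C₃ * (iteratedDeriv 2 U z + 3 * U z ^ 2)) (F3op C₃ U y) y := by
    intro y
    have h := ((hu 2 y).add ((hsq y).const_mul 3)).const_mul C₃
    refine h.congr_deriv ?_
    simp only [F3op]
    try ring
  have hPcont : Continuous (fun z => C₃ * (iteratedDeriv 2 U z + 3 * U z ^ 2)) :=
    continuous_const.mul ((hck 2).add (continuous_const.mul (hcU.pow 2)))
  have havgF : avg (F3op C₃ U) = 0 := by
    refine my_avg_deriv_zero hFP hcF ?_
    intro z
    simp only [hup 2 z, hper z]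
  have hUF : ∀ y, HasDerivAt (fun z => C₃ * (U z * iteratedDeriv 2 U z - deriv U z ^ 2 / 2 + 2 * U z ^ 3))
      (U y * F3op C₃ U y) y := by
    intro y
    have h := ((((hu0 y).mul (hu 2 y)).sub ((hdsq y).div_const 2)).add ((hcb y).const_mul 2)).const_mul C₃
    exact h.congr_deriv (by simp only [F3op]; ring)
  have havgUF : avg (fun y => U y * F3op C₃ U y) = 0 := by
    refine my_avg_deriv_zero hUF (hcU.mul hcF) ?_
    intro z
    simp only [hper z, hup 2 z, hperd z]
  have havgP : avg (fun z => C₃ * (iteratedDeriv 2 U z + 3 * U z ^ 2)) = 3 * C₃ * avg (fun w => U w ^ 2) := by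
    have h : (fun z => C₃ * (iteratedDeriv 2 U z + 3 * U z ^ 2))
        = fun z => C₃ * iteratedDeriv 2 U z + (3 * C₃) * (U z ^ 2) := by funext z; ring
    rw [h, my_avg_lin C₃ (3 * C₃) (g := fun w => U w ^ 2) (hck 2) (hcU.pow 2), havgu2]
    ring
  -- avg expansions
  have havg1 : ∀ ε : ℝ, avg (fun y => U y + ε * F3op C₃ U y) = avg U := by
    intro ε
    have h : (fun y => U y + ε * F3op C₃ U y) = fun y => 1 * U y + ε * F3op C₃ U y := by
      funext y; ring
    rw [h, my_avg_lin 1 ε hcU hcF, havgF]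
    ring
  have havg2 : ∀ ε : ℝ, avg (fun y => (U y + ε * F3op C₃ U y) ^ 2)
      = avg (fun w => U w ^ 2) + ε ^ 2 * avg (fun w => F3op C₃ U w ^ 2) := by
    intro ε
    have h : (fun y => (U y + ε * F3op C₃ U y) ^ 2)
        = fun y => 1 * (U y ^ 2) + (2 * ε) * (U y * F3op C₃ U y) + ε ^ 2 * (F3op C₃ U y ^ 2) := by
      funext y; ring
    rw [h, my_avg_lin3 1 (2 * ε) (ε ^ 2) (f := fun y => U y ^ 2) (g := fun y => U y * F3op C₃ U y) (h := fun y => F3op C₃ U y ^ 2) (hcU.pow 2) (hcU.mul hcF) (hcF.pow 2), havgUF]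
    ring
  -- prim expansion
  have hW0d : ∀ z, HasDerivAt (fun w => ∫ t in (0:ℝ)..w, (U t - avg U)) (U z - avg U) z := fun z =>
    ((hcU.sub continuous_const).integral_hasStrictDerivAt 0 z).hasDerivAt
  have hW0c : Continuous (fun w => ∫ t in (0:ℝ)..w, (U t - avg U)) := by
    have h : Differentiable ℝ (fun w => ∫ t in (0:ℝ)..w, (U t - avg U)) := fun z => (hW0d z).differentiableAt
    exact h.continuous
  have hQx : prim (fun z => U z - avg U) x
      = (∫ t in (0:ℝ)..x, (U t - avg U)) - avg (fun w => ∫ t in (0:ℝ)..w, (U t - avg U)) :=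
    my_prim_formula hW0d (hcU.sub continuous_const) hW0c x
  have hprimexp : ∀ ε : ℝ, prim (fun z => U z + ε * F3op C₃ U z - avg U) x
      = prim (fun z => U z - avg U) x + ε * (C₃ * (iteratedDeriv 2 U x + 3 * U x ^ 2) - 3 * C₃ * avg (fun w => U w ^ 2)) := by
    intro ε
    have hg : ∀ z, HasDerivAt (fun w => (∫ t in (0:ℝ)..w, (U t - avg U)) + ε * (C₃ * (iteratedDeriv 2 U w + 3 * U w ^ 2)))
        (U z + ε * F3op C₃ U z - avg U) z := by
      intro z
      have h := (hW0d z).add ((hFP z).const_mul ε)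
      exact h.congr_deriv (by ring)
    have hcomb : Continuous (fun z => U z + ε * F3op C₃ U z - avg U) :=
      (hcU.add (continuous_const.mul hcF)).sub continuous_const
    have hgc : Continuous (fun w => (∫ t in (0:ℝ)..w, (U t - avg U)) + ε * (C₃ * (iteratedDeriv 2 U w + 3 * U w ^ 2))) :=
      hW0c.add (continuous_const.mul hPcont)
    rw [my_prim_formula hg hcomb hgc x, hQx]
    have h : (fun w => (∫ t in (0:ℝ)..w, (U t - avg U)) + ε * (C₃ * (iteratedDeriv 2 U w + 3 * U w ^ 2)))
        = fun w => 1 * (∫ t in (0:ℝ)..w, (U t - avg U)) + ε * (C₃ * (iteratedDeriv 2 U w + 3 * U w ^ 2)) := by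
      funext w; ring
    rw [h, my_avg_lin 1 ε hW0c hPcont, havgP]
    ring
  -- iterated derivative expansions of the perturbed functions
  have hderivF : ∀ ε : ℝ, deriv (fun y => U y + ε * F3op C₃ U y) x = deriv U x + ε * (C₃ * (iteratedDeriv 4 U x + 6 * deriv U x ^ 2 + 6 * U x * iteratedDeriv 2 U x)) := by
    intro ε
    exact ((hu0 x).add ((hFd x).const_mul ε)).deriv
  have hiter2F : ∀ ε : ℝ, iteratedDeriv 2 (fun y => U y + ε * F3op C₃ U y) x
      = iteratedDeriv 2 U x + ε * (C₃ * (iteratedDeriv 5 U x + 18 * deriv U x * iteratedDeriv 2 U x + 6 * U x * iteratedDeriv 3 U x)) := by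
    intro ε
    have hW : ∀ y, HasDerivAt (fun z => U z + ε * F3op C₃ U z) (deriv U y + ε * (C₃ * (iteratedDeriv 4 U y + 6 * deriv U y ^ 2 + 6 * U y * iteratedDeriv 2 U y))) y :=
      fun y => (hu0 y).add ((hFd y).const_mul ε)
    have e1 : deriv (fun z => U z + ε * F3op C₃ U z) = fun z => deriv U z + ε * (C₃ * (iteratedDeriv 4 U z + 6 * deriv U z ^ 2 + 6 * U z * iteratedDeriv 2 U z)) :=
      funext fun y => (hW y).deriv
    rw [iteratedDeriv_succ, iteratedDeriv_one, e1]
    exact ((hu1 x).add ((hF1d x).const_mul ε)).deriv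
  have hderivG : ∀ ε : ℝ, deriv (fun y => U y + ε * G2op C₃ C₅ a₁ a₂ a₃ a₄ U y) x
      = deriv U x + ε * (C₅ / C₃ * (a₁ * iteratedDeriv 3 U x + a₂ * (2 * U x * deriv U x) + a₃ * (iteratedDeriv 2 U x * prim (fun z => U z - avg U) x + deriv U x * (U x - avg U)) + a₄ * avg U * deriv U x)) := by
    intro ε
    exact ((hu0 x).add ((hGd x).const_mul ε)).deriv
  have hiter3G : ∀ ε : ℝ, iteratedDeriv 3 (fun y => U y + ε * G2op C₃ C₅ a₁ a₂ a₃ a₄ U y) x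
      = iteratedDeriv 3 U x + ε * (C₅ / C₃ * (a₁ * iteratedDeriv 5 U x + a₂ * (6 * deriv U x * iteratedDeriv 2 U x + 2 * U x * iteratedDeriv 3 U x) + a₃ * (iteratedDeriv 4 U x * prim (fun z => U z - avg U) x + 3 * iteratedDeriv 3 U x * (U x - avg U) + 4 * deriv U x * iteratedDeriv 2 U x) + a₄ * avg U * iteratedDeriv 3 U x)) := by
    intro ε
    have e1 : deriv (fun z => U z + ε * G2op C₃ C₅ a₁ a₂ a₃ a₄ U z) = fun z => deriv U z + ε * (C₅ / C₃ * (a₁ * iteratedDeriv 3 U z + a₂ * (2 * U z * deriv U z) + a₃ * (iteratedDeriv 2 U z * prim (fun z => U z - avg U) z + deriv U z * (U z - avg U)) + a₄ * avg U * deriv U z)) :=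
      funext fun y => ((hu0 y).add ((hGd y).const_mul ε)).deriv
    have e2 : deriv (fun z => deriv U z + ε * (C₅ / C₃ * (a₁ * iteratedDeriv 3 U z + a₂ * (2 * U z * deriv U z) + a₃ * (iteratedDeriv 2 U z * prim (fun z => U z - avg U) z + deriv U z * (U z - avg U)) + a₄ * avg U * deriv U z))) = fun z => iteratedDeriv 2 U z + ε * (C₅ / C₃ * (a₁ * iteratedDeriv 4 U z + a₂ * (2 * deriv U z ^ 2 + 2 * U z * iteratedDeriv 2 U z) + a₃ * (iteratedDeriv 3 U z * prim (fun z => U z - avg U) z + 2 * iteratedDeriv 2 U z * (U z - avg U) + deriv U z ^ 2) + a₄ * avg U * iteratedDeriv 2 U z)) :=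
      funext fun y => ((hu1 y).add ((hG1d y).const_mul ε)).deriv
    rw [iteratedDeriv_succ, iteratedDeriv_succ, iteratedDeriv_one, e1, e2]
    exact ((hu 2 x).add ((hG2d x).const_mul ε)).deriv
  -- pointwise expansions in ε
  have hA : ∀ ε : ℝ, G2op C₃ C₅ a₁ a₂ a₃ a₄ (fun y => U y + ε * F3op C₃ U y) x
      = C₅ / C₃ * (a₁ * (iteratedDeriv 2 U x + ε * (C₃ * (iteratedDeriv 5 U x + 18 * deriv U x * iteratedDeriv 2 U x + 6 * U x * iteratedDeriv 3 U x)))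
        + a₂ * ((U x + ε * F3op C₃ U x) ^ 2 - (avg (fun w => U w ^ 2) + ε ^ 2 * avg (fun w => F3op C₃ U w ^ 2)))
        + a₃ * ((deriv U x + ε * (C₃ * (iteratedDeriv 4 U x + 6 * deriv U x ^ 2 + 6 * U x * iteratedDeriv 2 U x))) * (prim (fun z => U z - avg U) x + ε * (C₃ * (iteratedDeriv 2 U x + 3 * U x ^ 2) - 3 * C₃ * avg (fun w => U w ^ 2))) + (avg (fun w => U w ^ 2) + ε ^ 2 * avg (fun w => F3op C₃ U w ^ 2)) - avg U ^ 2)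
        + a₄ * avg U * (U x + ε * F3op C₃ U x - avg U)) := by
    intro ε
    simp only [G2op]
    rw [havg1 ε, havg2 ε, hiter2F ε, hderivF ε, hprimexp ε]
  have hB : ∀ ε : ℝ, F3op C₃ (fun y => U y + ε * G2op C₃ C₅ a₁ a₂ a₃ a₄ U y) x
      = C₃ * (iteratedDeriv 3 U x + ε * (C₅ / C₃ * (a₁ * iteratedDeriv 5 U x + a₂ * (6 * deriv U x * iteratedDeriv 2 U x + 2 * U x * iteratedDeriv 3 U x) + a₃ * (iteratedDeriv 4 U x * prim (fun z => U z - avg U) x + 3 * iteratedDeriv 3 U x * (U x - avg U) + 4 * deriv U x * iteratedDeriv 2 U x) + a₄ * avg U * iteratedDeriv 3 U x))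
        + 6 * (U x + ε * (C₅ / C₃ * (a₁ * iteratedDeriv 2 U x + a₂ * (U x ^ 2 - avg (fun w => U w ^ 2)) + a₃ * (deriv U x * prim (fun z => U z - avg U) x + avg (fun w => U w ^ 2) - avg U ^ 2) + a₄ * avg U * (U x - avg U)))) * (deriv U x + ε * (C₅ / C₃ * (a₁ * iteratedDeriv 3 U x + a₂ * (2 * U x * deriv U x) + a₃ * (iteratedDeriv 2 U x * prim (fun z => U z - avg U) x + deriv U x * (U x - avg U)) + a₄ * avg U * deriv U x)))) := by
    intro ε
    simp only [F3op]
    rw [hiter3G ε, hderivG ε]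
    simp only [G2op]
    try ring
  have key : (fun ε : ℝ =>
          G2op C₃ C₅ a₁ a₂ a₃ a₄ (fun y => U y + ε * F3op C₃ U y) x
            - F3op C₃ (fun y => U y + ε * G2op C₃ C₅ a₁ a₂ a₃ a₄ U y) x)
      = fun ε : ℝ => ((C₅ / C₃ * (a₁ * iteratedDeriv 2 U x + a₂ * (U x ^ 2 - avg (fun w => U w ^ 2)) + a₃ * (deriv U x * prim (fun z => U z - avg U) x + avg (fun w => U w ^ 2) - avg U ^ 2) + a₄ * avg U * (U x - avg U))) - C₃ * (iteratedDeriv 3 U x + 6 * U x * deriv U x)) + (C₅ / C₃ * (a₁ * (C₃ * (iteratedDeriv 5 U x + 18 * deriv U x * iteratedDeriv 2 U x + 6 * U x * iteratedDeriv 3 U x)) + a₂ * (2 * U x * F3op C₃ U x) + a₃ * ((C₃ * (iteratedDeriv 4 U x + 6 * deriv U x ^ 2 + 6 * U x * iteratedDeriv 2 U x)) * prim (fun z => U z - avg U) x + deriv U x * (C₃ * (iteratedDeriv 2 U x + 3 * U x ^ 2) - 3 * C₃ * avg (fun w => U w ^ 2))) + a₄ * avg U * F3op C₃ U x) - C₃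 * ((C₅ / C₃ * (a₁ * iteratedDeriv 5 U x + a₂ * (6 * deriv U x * iteratedDeriv 2 U x + 2 * U x * iteratedDeriv 3 U x) + a₃ * (iteratedDeriv 4 U x * prim (fun z => U z - avg U) x + 3 * iteratedDeriv 3 U x * (U x - avg U) + 4 * deriv U x * iteratedDeriv 2 U x) + a₄ * avg U * iteratedDeriv 3 U x)) + 6 * ((C₅ / C₃ * (a₁ * iteratedDeriv 2 U x + a₂ * (U x ^ 2 - avg (fun w => U w ^ 2)) + a₃ * (deriv U x * prim (fun z => U z - avg U) x + avg (fun w => U w ^ 2) - avg U ^ 2) + a₄ * avg U * (U x - avg U))) * deriv U x + U x * (C₅ / C₃ * (a₁ * iteratedDeriv 3 U x + a₂ * (2 * U x * deriv U x) + a₃ * (iteratedDeriv 2 U x * prim (fun z => U z - avg U) x + deriv U x * (U x - avg U)) + a₄ * avg U * deriv U x))))) * ε + (C₅ / C₃ * (a₂ * (F3op C₃ U x ^ 2 - avg (fun w => F3op C₃ U w ^ 2)) + a₃ * ((C₃ * (iteratedDeriv 4 U x + 6 * deriv U x ^ 2 + 6 * U x * iteratedDeriv 2 U x)) * (C₃ *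 (iteratedDeriv 2 U x + 3 * U x ^ 2) - 3 * C₃ * avg (fun w => U w ^ 2)) + avg (fun w => F3op C₃ U w ^ 2))) - C₃ * (6 * (C₅ / C₃ * (a₁ * iteratedDeriv 2 U x + a₂ * (U x ^ 2 - avg (fun w => U w ^ 2)) + a₃ * (deriv U x * prim (fun z => U z - avg U) x + avg (fun w => U w ^ 2) - avg U ^ 2) + a₄ * avg U * (U x - avg U))) * (C₅ / C₃ * (a₁ * iteratedDeriv 3 U x + a₂ * (2 * U x * deriv U x) + a₃ * (iteratedDeriv 2 U x * prim (fun z => U z - avg U) x + deriv U x * (U x - avg U)) + a₄ * avg U * deriv U x)))) * ε ^ 2 := by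
    funext ε
    rw [hA ε, hB ε]
    ring
  rw [key]
  have hq : HasDerivAt (fun ε : ℝ => ((C₅ / C₃ * (a₁ * iteratedDeriv 2 U x + a₂ * (U x ^ 2 - avg (fun w => U w ^ 2)) + a₃ * (deriv U x * prim (fun z => U z - avg U) x + avg (fun w => U w ^ 2) - avg U ^ 2) + a₄ * avg U * (U x - avg U))) - C₃ * (iteratedDeriv 3 U x + 6 * U x * deriv U x)) + (C₅ / C₃ * (a₁ * (C₃ * (iteratedDeriv 5 U x + 18 * deriv U x * iteratedDeriv 2 U x + 6 * U x * iteratedDeriv 3 U x)) + a₂ * (2 * U x * F3op C₃ U x) + a₃ * ((C₃ * (iteratedDeriv 4 U x + 6 * deriv U x ^ 2 + 6 * U x * iteratedDeriv 2 U x)) * prim (fun z => U z - avg U) x + deriv U x * (C₃ * (iteratedDeriv 2 U x + 3 * U x ^ 2) - 3 * C₃ * avg (fun w => U w ^ 2))) + a₄ * avg U * F3op C₃ U x) - C₃ * ((C₅ / C₃ * (a₁ * iteratedDeriv 5 U x + a₂ * (6 * deriv U x * iteratedDeriv 2 U x + 2 * U x * iteratedDeriv 3 U x) + a₃ * (iteratedDeriv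 4 U x * prim (fun z => U z - avg U) x + 3 * iteratedDeriv 3 U x * (U x - avg U) + 4 * deriv U x * iteratedDeriv 2 U x) + a₄ * avg U * iteratedDeriv 3 U x)) + 6 * ((C₅ / C₃ * (a₁ * iteratedDeriv 2 U x + a₂ * (U x ^ 2 - avg (fun w => U w ^ 2)) + a₃ * (deriv U x * prim (fun z => U z - avg U) x + avg (fun w => U w ^ 2) - avg U ^ 2) + a₄ * avg U * (U x - avg U))) * deriv U x + U x * (C₅ / C₃ * (a₁ * iteratedDeriv 3 U x + a₂ * (2 * U x * deriv U x) + a₃ * (iteratedDeriv 2 U x * prim (fun z => U z - avg U) x + deriv U x * (U x - avg U)) + a₄ * avg U * deriv U x))))) * ε + (C₅ / C₃ * (a₂ * (F3op C₃ U x ^ 2 - avg (fun w => F3op C₃ U w ^ 2)) + a₃ * ((C₃ * (iteratedDeriv 4 U x + 6 * deriv U x ^ 2 + 6 * U x * iteratedDeriv 2 U x)) * (C₃ * (iteratedDeriv 2 U x + 3 * U x ^ 2) - 3 * C₃ * avg (fun w => U w ^ 2)) + avg (fun w => F3op C₃ U w ^ 2))) - C₃ * (6 * (C₅ / C₃ *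 (a₁ * iteratedDeriv 2 U x + a₂ * (U x ^ 2 - avg (fun w => U w ^ 2)) + a₃ * (deriv U x * prim (fun z => U z - avg U) x + avg (fun w => U w ^ 2) - avg U ^ 2) + a₄ * avg U * (U x - avg U))) * (C₅ / C₃ * (a₁ * iteratedDeriv 3 U x + a₂ * (2 * U x * deriv U x) + a₃ * (iteratedDeriv 2 U x * prim (fun z => U z - avg U) x + deriv U x * (U x - avg U)) + a₄ * avg U * deriv U x)))) * ε ^ 2) ((C₅ / C₃ * (a₁ * (C₃ * (iteratedDeriv 5 U x + 18 * deriv U x * iteratedDeriv 2 U x + 6 * U x * iteratedDeriv 3 U x)) + a₂ * (2 * U x * F3op C₃ U x) + a₃ * ((C₃ * (iteratedDeriv 4 U x + 6 * deriv U x ^ 2 + 6 * U x * iteratedDeriv 2 U x)) * prim (fun z => U z - avg U) x + deriv U x * (C₃ * (iteratedDeriv 2 U x + 3 * U x ^ 2) - 3 * C₃ * avg (fun w => U w ^ 2))) + a₄ * avg U * F3op C₃ U x) - C₃ * ((C₅ / C₃ * (a₁ * iteratedDeriv 5 U x + a₂ * (6 * deriv U x * iteratedDeriv 2 U x + 2 *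 U x * iteratedDeriv 3 U x) + a₃ * (iteratedDeriv 4 U x * prim (fun z => U z - avg U) x + 3 * iteratedDeriv 3 U x * (U x - avg U) + 4 * deriv U x * iteratedDeriv 2 U x) + a₄ * avg U * iteratedDeriv 3 U x)) + 6 * ((C₅ / C₃ * (a₁ * iteratedDeriv 2 U x + a₂ * (U x ^ 2 - avg (fun w => U w ^ 2)) + a₃ * (deriv U x * prim (fun z => U z - avg U) x + avg (fun w => U w ^ 2) - avg U ^ 2) + a₄ * avg U * (U x - avg U))) * deriv U x + U x * (C₅ / C₃ * (a₁ * iteratedDeriv 3 U x + a₂ * (2 * U x * deriv U x) + a₃ * (iteratedDeriv 2 U x * prim (fun z => U z - avg U) x + deriv U x * (U x - avg U)) + a₄ * avg U * deriv U x)))))) 0 := by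
    have h := (((hasDerivAt_id (0:ℝ)).const_mul ((C₅ / C₃ * (a₁ * (C₃ * (iteratedDeriv 5 U x + 18 * deriv U x * iteratedDeriv 2 U x + 6 * U x * iteratedDeriv 3 U x)) + a₂ * (2 * U x * F3op C₃ U x) + a₃ * ((C₃ * (iteratedDeriv 4 U x + 6 * deriv U x ^ 2 + 6 * U x * iteratedDeriv 2 U x)) * prim (fun z => U z - avg U) x + deriv U x * (C₃ * (iteratedDeriv 2 U x + 3 * U x ^ 2) - 3 * C₃ * avg (fun w => U w ^ 2))) + a₄ * avg U * F3op C₃ U x) - C₃ * ((C₅ / C₃ * (a₁ * iteratedDeriv 5 U x + a₂ * (6 * deriv U x * iteratedDeriv 2 U x + 2 * U x * iteratedDeriv 3 U x) + a₃ * (iteratedDeriv 4 U x * prim (fun z => U z - avg U) x + 3 * iteratedDeriv 3 U x * (U x - avg U) + 4 * deriv U x * iteratedDeriv 2 U x) + a₄ * avg U * iteratedDeriv 3 U x)) + 6 * ((C₅ / C₃ * (a₁ * iteratedDeriv 2 U x + a₂ * (U x ^ 2 - avg (fun w => U w ^ 2)) + a₃ * (deriv U x * prim (fun z => U z - avg U)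 x + avg (fun w => U w ^ 2) - avg U ^ 2) + a₄ * avg U * (U x - avg U))) * deriv U x + U x * (C₅ / C₃ * (a₁ * iteratedDeriv 3 U x + a₂ * (2 * U x * deriv U x) + a₃ * (iteratedDeriv 2 U x * prim (fun z => U z - avg U) x + deriv U x * (U x - avg U)) + a₄ * avg U * deriv U x))))))).const_add (((C₅ / C₃ * (a₁ * iteratedDeriv 2 U x + a₂ * (U x ^ 2 - avg (fun w => U w ^ 2)) + a₃ * (deriv U x * prim (fun z => U z - avg U) x + avg (fun w => U w ^ 2) - avg U ^ 2) + a₄ * avg U * (U x - avg U))) - C₃ * (iteratedDeriv 3 U x + 6 * U x * deriv U x)))).add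
      ((hasDerivAt_pow 2 (0:ℝ)).const_mul ((C₅ / C₃ * (a₂ * (F3op C₃ U x ^ 2 - avg (fun w => F3op C₃ U w ^ 2)) + a₃ * ((C₃ * (iteratedDeriv 4 U x + 6 * deriv U x ^ 2 + 6 * U x * iteratedDeriv 2 U x)) * (C₃ * (iteratedDeriv 2 U x + 3 * U x ^ 2) - 3 * C₃ * avg (fun w => U w ^ 2)) + avg (fun w => F3op C₃ U w ^ 2))) - C₃ * (6 * (C₅ / C₃ * (a₁ * iteratedDeriv 2 U x + a₂ * (U x ^ 2 - avg (fun w => U w ^ 2)) + a₃ * (deriv U x * prim (fun z => U z - avg U) x + avg (fun w => U w ^ 2) - avg U ^ 2) + a₄ * avg U * (U x - avg U))) * (C₅ / C₃ * (a₁ * iteratedDeriv 3 U x + a₂ * (2 * U x * deriv U x) + a₃ * (iteratedDeriv 2 U x * prim (fun z => U z - avg U) x + deriv U x * (U x - avg U)) + a₄ * avg U * deriv U x))))))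
    have h2 : (C₅ / C₃ * (a₁ * (C₃ * (iteratedDeriv 5 U x + 18 * deriv U x * iteratedDeriv 2 U x + 6 * U x * iteratedDeriv 3 U x)) + a₂ * (2 * U x * F3op C₃ U x) + a₃ * ((C₃ * (iteratedDeriv 4 U x + 6 * deriv U x ^ 2 + 6 * U x * iteratedDeriv 2 U x)) * prim (fun z => U z - avg U) x + deriv U x * (C₃ * (iteratedDeriv 2 U x + 3 * U x ^ 2) - 3 * C₃ * avg (fun w => U w ^ 2))) + a₄ * avg U * F3op C₃ U x) - C₃ * ((C₅ / C₃ * (a₁ * iteratedDeriv 5 U x + a₂ * (6 * deriv U x * iteratedDeriv 2 U x + 2 * U x * iteratedDeriv 3 U x) + a₃ * (iteratedDeriv 4 U x * prim (fun z => U z - avg U) x + 3 * iteratedDeriv 3 U x * (U x - avg U) + 4 * deriv U x * iteratedDeriv 2 U x) + a₄ * avg U * iteratedDeriv 3 U x)) + 6 * ((C₅ / C₃ * (a₁ * iteratedDeriv 2 U x + a₂ * (U x ^ 2 - avg (fun w => U w ^ 2)) + a₃ * (deriv U x * prim (fun z => U z - avg U) x + avg (fun w => U w ^ 2) - avg U ^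 2) + a₄ * avg U * (U x - avg U))) * deriv U x + U x * (C₅ / C₃ * (a₁ * iteratedDeriv 3 U x + a₂ * (2 * U x * deriv U x) + a₃ * (iteratedDeriv 2 U x * prim (fun z => U z - avg U) x + deriv U x * (U x - avg U)) + a₄ * avg U * deriv U x))))) * 1 + (C₅ / C₃ * (a₂ * (F3op C₃ U x ^ 2 - avg (fun w => F3op C₃ U w ^ 2)) + a₃ * ((C₃ * (iteratedDeriv 4 U x + 6 * deriv U x ^ 2 + 6 * U x * iteratedDeriv 2 U x)) * (C₃ * (iteratedDeriv 2 U x + 3 * U x ^ 2) - 3 * C₃ * avg (fun w => U w ^ 2)) + avg (fun w => F3op C₃ U w ^ 2))) - C₃ * (6 * (C₅ / C₃ * (a₁ * iteratedDeriv 2 U x + a₂ * (U x ^ 2 - avg (fun w => U w ^ 2)) + a₃ * (deriv U x * prim (fun z => U z - avg U) x + avg (fun w => U w ^ 2) - avg U ^ 2) + a₄ * avg U * (U x - avg U))) * (C₅ / C₃ * (a₁ * iteratedDeriv 3 U x + a₂ * (2 * U x * deriv U x) + a₃ * (iteratedDeriv 2 U x * prim (fun z => U z - avg U) x + deriv U x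 * (U x - avg U)) + a₄ * avg U * deriv U x)))) * (↑2 * (0:ℝ) ^ (2 - 1)) = (C₅ / C₃ * (a₁ * (C₃ * (iteratedDeriv 5 U x + 18 * deriv U x * iteratedDeriv 2 U x + 6 * U x * iteratedDeriv 3 U x)) + a₂ * (2 * U x * F3op C₃ U x) + a₃ * ((C₃ * (iteratedDeriv 4 U x + 6 * deriv U x ^ 2 + 6 * U x * iteratedDeriv 2 U x)) * prim (fun z => U z - avg U) x + deriv U x * (C₃ * (iteratedDeriv 2 U x + 3 * U x ^ 2) - 3 * C₃ * avg (fun w => U w ^ 2))) + a₄ * avg U * F3op C₃ U x) - C₃ * ((C₅ / C₃ * (a₁ * iteratedDeriv 5 U x + a₂ * (6 * deriv U x * iteratedDeriv 2 U x + 2 * U x * iteratedDeriv 3 U x) + a₃ * (iteratedDeriv 4 U x * prim (fun z => U z - avg U) x + 3 * iteratedDeriv 3 U x * (U x - avg U) + 4 * deriv U x * iteratedDeriv 2 U x) + a₄ * avg U * iteratedDeriv 3 U x)) + 6 * ((C₅ / C₃ * (a₁ * iteratedDeriv 2 U x + a₂ * (U x ^ 2 - avg (fun w => U w ^ 2)) +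 a₃ * (deriv U x * prim (fun z => U z - avg U) x + avg (fun w => U w ^ 2) - avg U ^ 2) + a₄ * avg U * (U x - avg U))) * deriv U x + U x * (C₅ / C₃ * (a₁ * iteratedDeriv 3 U x + a₂ * (2 * U x * deriv U x) + a₃ * (iteratedDeriv 2 U x * prim (fun z => U z - avg U) x + deriv U x * (U x - avg U)) + a₄ * avg U * deriv U x))))) := by norm_num
    rw [← h2]
    refine HasDerivAt.congr_of_eventuallyEq h (Filter.Eventually.of_forall fun ε => ?_)
    simp [mul_comm]
    try ring
  convert hq using 1
  simp only [F3op, F5op]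
  subst ha₁ ha₂ ha₃ ha₄
  field_simp
  ring
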